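/- Let q be a real number with q > 1 and m ≥ 1 an integer. For 1 ≤ k ≤ m define d_k = (1/( q^{2k^2-k} (q^{-2};q^{-2})_{k-1} )) · ( (q^{-2k}; q^{-2})_{m-k} / (q^{-2}; q^{-2})_{m-k} ) · q^{-(m-k)}. Then Σ_{k=1}^{m} d_k = (1/q^m) · Σ_{i=1}^{m} (-1)^{i-1} / ( q^{i(i-1)} (1/q^2; 1/q^2)_{m-i} ). -/

import Mathlib

/-- The q-Pochhammer symbol `(a; Q)_n = ∏_{j=0}^{n-1} (1 - a Q^j)` over the reals. -/
noncomputable def qPoch (a Q : ℝ) (n : ℕ) : ℝ := ∏ j ∈ Finset.range n, (1 - a * Q ^ j)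

/-!
Put `t = q⁻¹`, `Q = t²` and `m = n + 1`. The `k`-th term of the left side is
`t^m (Q;Q)_n Q^{a(a+1)} / ((Q;Q)_a² (Q;Q)_b)` with `a = k - 1`, `b = m - k`, and the right side is
`t^m R_n` with `R_n = ∑_{a+b=n} (-1)^a t^{a(a+1)} / (Q;Q)_b`. Passing from `n` to `n + 1`, a
convolution `∑_{a+b=n} f a / (Q;Q)_b` grows by `∑_{a+b=n+1} f a Q^b / (Q;Q)_b`. On the left this
increment is `Q^{n+1} / (Q;Q)_{n+1}²` by a finite form of the Durfee rectangle identity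
`∑_{a+b=n} Q^{a(a+r)} / ((Q;Q)_a (Q;Q)_b (Q;Q)_{a+r}) = 1 / ((Q;Q)_n (Q;Q)_{n+r})`,
itself proved by induction on `n` from `1 - Q^{a+b} = (1 - Q^b) + Q^b (1 - Q^a)`. On the right
it is `Q^{n+1} / (Q;Q)_{n+1} - Q^{n+1} R_n`, because the coefficients `c_a = (-1)^a t^{a(a+1)}`
satisfy `c_{a+1} = -Q^{a+1} c_a`. Hence `(Q;Q)_n` times the left sum and `R_n` obey the same recursion.
-/

open Finset

theorem qPoch_zero (a Q : ℝ) : qPoch a Q 0 = 1 := prod_range_zero _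

theorem qPoch_succ (a Q : ℝ) (n : ℕ) : qPoch a Q (n + 1) = qPoch a Q n * (1 - a * Q ^ n) :=
  prod_range_succ _ _

theorem qPoch_self_succ (Q : ℝ) (n : ℕ) :
    qPoch Q Q (n + 1) = qPoch Q Q n * (1 - Q ^ (n + 1)) := by
  rw [qPoch_succ, pow_succ']

theorem qPoch_add (a Q : ℝ) (m n : ℕ) :
    qPoch a Q (m + n) = qPoch a Q m * qPoch (a * Q ^ m) Q n := by
  simp only [qPoch, prod_range_add, pow_add, mul_assoc]

theorem qPoch_self_ne_zero {Q : ℝ} (hQ : ∀ n : ℕ, Q ^ (n + 1) ≠ 1) (n : ℕ) : qPoch Q Q n ≠ 0 :=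
  prod_ne_zero_iff.2 fun j _ => by rw [← pow_succ']; exact sub_ne_zero.2 (hQ j).symm

theorem one_sub_pow_div_qPoch_self_succ {Q : ℝ} {n : ℕ} (hQ : Q ^ (n + 1) ≠ 1) :
    (1 - Q ^ (n + 1)) / qPoch Q Q (n + 1) = (qPoch Q Q n)⁻¹ := by
  rw [qPoch_self_succ, div_mul_cancel_right₀ (sub_ne_zero.2 hQ.symm)]

theorem inv_qPoch_self_succ {Q : ℝ} {n : ℕ} (hQ : Q ^ (n + 1) ≠ 1) :
    (qPoch Q Q (n + 1))⁻¹ = (qPoch Q Q n)⁻¹ + Q ^ (n + 1) / qPoch Q Q (n + 1) := by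
  rw [← one_sub_pow_div_qPoch_self_succ hQ, sub_div, one_div, sub_add_cancel]

theorem sum_antidiagonal_durfee {Q : ℝ} (hQ : ∀ n : ℕ, Q ^ (n + 1) ≠ 1) (n r : ℕ) :
    ∑ p ∈ antidiagonal n,
        Q ^ (p.1 * (p.1 + r)) / (qPoch Q Q p.1 * qPoch Q Q p.2 * qPoch Q Q (p.1 + r))
      = (qPoch Q Q n * qPoch Q Q (n + r))⁻¹ := by
  induction n generalizing r with
  | zero => simp [qPoch_zero]
  | succ n ih =>
    set F : ℕ × ℕ → ℝ := fun p =>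
      Q ^ (p.1 * (p.1 + r)) / (qPoch Q Q p.1 * qPoch Q Q p.2 * qPoch Q Q (p.1 + r))
    have hP := qPoch_self_ne_zero hQ
    have first : ∑ p ∈ antidiagonal (n + 1), (1 - Q ^ p.2) * F p
        = (qPoch Q Q n * qPoch Q Q (n + r))⁻¹ := by
      rw [Nat.sum_antidiagonal_succ', ← ih r]
      simp only [F, pow_zero, sub_self, zero_mul, zero_add]
      refine sum_congr rfl fun p _ => ?_
      rw [qPoch_self_succ]
      field_simp [hP, sub_ne_zero.2 (hQ p.2).symm]
    have second : ∑ p ∈ antidiagonal (n + 1), Q ^ p.2 * (1 - Q ^ p.1) * F p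
        = Q ^ (n + r + 1) * (qPoch Q Q n * qPoch Q Q (n + (r + 1)))⁻¹ := by
      rw [Nat.sum_antidiagonal_succ, ← ih (r + 1), mul_sum]
      simp only [F, pow_zero, sub_self, mul_zero, zero_mul, zero_add]
      refine sum_congr rfl fun p hp => ?_
      have hpow : Q ^ p.2 * Q ^ ((p.1 + 1) * (p.1 + 1 + r))
          = Q ^ (n + r + 1) * Q ^ (p.1 * (p.1 + (r + 1))) := by
        rw [← pow_add, ← pow_add, ← mem_antidiagonal.1 hp]; ring_nf
      rw [qPoch_self_succ, show p.1 + 1 + r = p.1 + (r + 1) by ring]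
      field_simp [hP, sub_ne_zero.2 (hQ p.1).symm]
      linear_combination hpow
    have split : (1 - Q ^ (n + 1)) * ∑ p ∈ antidiagonal (n + 1), F p
        = ∑ p ∈ antidiagonal (n + 1), (1 - Q ^ p.2) * F p
          + ∑ p ∈ antidiagonal (n + 1), Q ^ p.2 * (1 - Q ^ p.1) * F p := by
      rw [mul_sum, ← sum_add_distrib]
      refine sum_congr rfl fun p hp => ?_
      rw [← mem_antidiagonal.1 hp, pow_add]
      ring
    rw [first, second, ← add_assoc, qPoch_self_succ Q (n + r)] at split
    rw [add_right_comm n 1 r, qPoch_self_succ Q n, qPoch_self_succ Q (n + r)]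
    have h1 := sub_ne_zero.2 (hQ n).symm
    have h2 := sub_ne_zero.2 (hQ (n + r)).symm
    field_simp [hP] at split ⊢
    linear_combination split

theorem sum_antidiagonal_div_qPoch_succ {Q : ℝ} (hQ : ∀ n : ℕ, Q ^ (n + 1) ≠ 1) (f : ℕ → ℝ)
    (n : ℕ) :
    ∑ p ∈ antidiagonal (n + 1), f p.1 / qPoch Q Q p.2
      = ∑ p ∈ antidiagonal n, f p.1 / qPoch Q Q p.2
        + ∑ p ∈ antidiagonal (n + 1), f p.1 * Q ^ p.2 / qPoch Q Q p.2 := by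
  rw [Nat.sum_antidiagonal_succ', Nat.sum_antidiagonal_succ', add_left_comm _ (f (n + 1) * _ / _),
    ← sum_add_distrib]
  simp only [qPoch_zero, pow_zero, mul_one]
  congr 1
  refine sum_congr rfl fun p _ => ?_
  rw [div_eq_mul_inv, inv_qPoch_self_succ (hQ p.2)]
  ring

theorem sum_antidiagonal_pow_div_qPoch_sq_succ {Q : ℝ} (hQ : ∀ n : ℕ, Q ^ (n + 1) ≠ 1)
    (n : ℕ) :
    ∑ p ∈ antidiagonal (n + 1), Q ^ (p.1 * (p.1 + 1)) / qPoch Q Q p.1 ^ 2 / qPoch Q Q p.2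
      = ∑ p ∈ antidiagonal n, Q ^ (p.1 * (p.1 + 1)) / qPoch Q Q p.1 ^ 2 / qPoch Q Q p.2
        + Q ^ (n + 1) / qPoch Q Q (n + 1) ^ 2 := by
  have durfee := sum_antidiagonal_durfee hQ (n + 1) 0
  rw [add_zero, ← sq] at durfee
  rw [sum_antidiagonal_div_qPoch_succ hQ (fun a => Q ^ (a * (a + 1)) / qPoch Q Q a ^ 2),
    add_right_inj, div_eq_mul_inv, ← durfee, mul_sum]
  refine sum_congr rfl fun p hp => ?_
  rw [← mem_antidiagonal.1 hp, add_zero, mul_add_one, pow_add, pow_add]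
  ring

theorem sum_antidiagonal_neg_one_pow_div_qPoch_succ {t : ℝ} (ht : ∀ n : ℕ, (t ^ 2) ^ (n + 1) ≠ 1)
    (n : ℕ) :
    ∑ p ∈ antidiagonal (n + 1), (-1) ^ p.1 * t ^ (p.1 * (p.1 + 1)) / qPoch (t ^ 2) (t ^ 2) p.2
      = (1 - (t ^ 2) ^ (n + 1))
          * ∑ p ∈ antidiagonal n, (-1) ^ p.1 * t ^ (p.1 * (p.1 + 1)) / qPoch (t ^ 2) (t ^ 2) p.2
        + (t ^ 2) ^ (n + 1) / qPoch (t ^ 2) (t ^ 2) (n + 1) := by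
  have shifted : ∑ p ∈ antidiagonal n,
      (-1) ^ (p.1 + 1) * t ^ ((p.1 + 1) * (p.1 + 1 + 1)) * (t ^ 2) ^ p.2 / qPoch (t ^ 2) (t ^ 2) p.2
        = -(t ^ 2) ^ (n + 1)
          * ∑ p ∈ antidiagonal n, (-1) ^ p.1 * t ^ (p.1 * (p.1 + 1)) / qPoch (t ^ 2) (t ^ 2) p.2 := by
    rw [mul_sum]
    refine sum_congr rfl fun p hp => ?_
    rw [← mem_antidiagonal.1 hp]
    ring
  rw [sum_antidiagonal_div_qPoch_succ ht (fun a => (-1) ^ a * t ^ (a * (a + 1))),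
    Nat.sum_antidiagonal_succ]
  simp only [pow_zero, zero_mul, one_mul, shifted]
  ring

theorem qPoch_mul_sum_antidiagonal {t : ℝ} (ht : ∀ n : ℕ, (t ^ 2) ^ (n + 1) ≠ 1) (n : ℕ) :
    qPoch (t ^ 2) (t ^ 2) n * ∑ p ∈ antidiagonal n,
        (t ^ 2) ^ (p.1 * (p.1 + 1)) / qPoch (t ^ 2) (t ^ 2) p.1 ^ 2 / qPoch (t ^ 2) (t ^ 2) p.2
      = ∑ p ∈ antidiagonal n, (-1) ^ p.1 * t ^ (p.1 * (p.1 + 1)) / qPoch (t ^ 2) (t ^ 2) p.2 := by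
  induction n with
  | zero => simp [qPoch_zero]
  | succ n ih =>
    rw [sum_antidiagonal_pow_div_qPoch_sq_succ ht, sum_antidiagonal_neg_one_pow_div_qPoch_succ ht,
      ← ih, qPoch_self_succ]
    have hP := qPoch_self_ne_zero ht n
    have hc := sub_ne_zero.2 (ht n).symm
    generalize (∑ p ∈ antidiagonal n, _ : ℝ) = L
    field_simp

theorem sum_Icc_one_eq_sum_antidiagonal {M : Type*} [AddCommMonoid M] (g : ℕ → M) (n : ℕ) :
    ∑ k ∈ Icc 1 (n + 1), g k = ∑ p ∈ antidiagonal n, g (p.1 + 1) := by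
  rw [Nat.sum_antidiagonal_eq_sum_range_succ (fun i _ => g (i + 1)), range_eq_Ico, sum_Ico_add',
    zero_add, Ico_add_one_right_eq_Icc]

theorem zpow_neg_two_mul_natCast (q : ℝ) (k : ℕ) : q ^ (-(2 * (k : ℤ))) = (q⁻¹ ^ 2) ^ k := by
  rw [← pow_mul, inv_pow, zpow_neg, ← zpow_natCast, Nat.cast_mul, Nat.cast_ofNat]

theorem zpow_neg_two (q : ℝ) : q ^ (-2 : ℤ) = q⁻¹ ^ 2 := by
  simp

theorem sum_antidiagonal_d_summand (q : ℝ) (n : ℕ) :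
    ∑ p ∈ antidiagonal n,
      1 / (q ^ (2 * (p.1 + 1) ^ 2 - (p.1 + 1))
          * qPoch (q ^ (-2 : ℤ)) (q ^ (-2 : ℤ)) (p.1 + 1 - 1))
        * (qPoch (q ^ (-(2 * ((p.1 + 1 : ℕ) : ℤ)))) (q ^ (-2 : ℤ)) (n + 1 - (p.1 + 1))
            / qPoch (q ^ (-2 : ℤ)) (q ^ (-2 : ℤ)) (n + 1 - (p.1 + 1)))
        * q ^ (-(((n + 1 : ℕ) : ℤ) - ((p.1 + 1 : ℕ) : ℤ)))
      = q⁻¹ ^ (n + 1) * (qPoch (q⁻¹ ^ 2) (q⁻¹ ^ 2) n * ∑ p ∈ antidiagonal n,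
          (q⁻¹ ^ 2) ^ (p.1 * (p.1 + 1)) / qPoch (q⁻¹ ^ 2) (q⁻¹ ^ 2) p.1 ^ 2
            / qPoch (q⁻¹ ^ 2) (q⁻¹ ^ 2) p.2) := by
  rw [mul_sum, mul_sum]
  refine sum_congr rfl fun ⟨a, b⟩ hab => ?_
  obtain rfl : a + b = n := mem_antidiagonal.1 hab
  have hexp : 2 * (a + 1) ^ 2 - (a + 1) = 2 * (a * (a + 1)) + (a + 1) := by
    rw [Nat.sub_eq_iff_eq_add (by nlinarith)]; ring
  have hcast : -(((a + b + 1 : ℕ) : ℤ) - ((a + 1 : ℕ) : ℤ)) = -(b : ℤ) := by push_cast; ring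
  rw [hexp, hcast, show a + b + 1 - (a + 1) = b by omega, zpow_neg_two_mul_natCast, zpow_neg_two,
    Nat.add_sub_cancel, qPoch_add, ← pow_succ', zpow_neg, zpow_natCast, ← inv_pow, ← inv_inv q,
    inv_pow q⁻¹, inv_inv]
  generalize q⁻¹ = t at *
  field_simp
  ring

theorem sum_antidiagonal_alternating_summand (q : ℝ) (n : ℕ) :
    ∑ p ∈ antidiagonal n, (-1 : ℝ) ^ (p.1 + 1 - 1)
        / (q ^ ((p.1 + 1) * (p.1 + 1 - 1)) * qPoch (q ^ (-2 : ℤ)) (q ^ (-2 : ℤ)) (n + 1 - (p.1 + 1)))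
      = ∑ p ∈ antidiagonal n, (-1) ^ p.1 * q⁻¹ ^ (p.1 * (p.1 + 1)) / qPoch (q⁻¹ ^ 2) (q⁻¹ ^ 2) p.2 := by
  refine sum_congr rfl fun ⟨a, b⟩ hab => ?_
  obtain rfl : a + b = n := mem_antidiagonal.1 hab
  rw [zpow_neg_two, show a + b + 1 - (a + 1) = b by omega, Nat.add_sub_cancel, inv_pow,
    mul_comm (a + 1)]
  ring

theorem anzanello_d_sum (q : ℝ) (hq : 1 < q) (m : ℕ) (hm : 1 ≤ m) :
    ∑ k ∈ Finset.Icc 1 m,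
      1 / (q ^ (2 * k ^ 2 - k) * qPoch (q ^ (-2 : ℤ)) (q ^ (-2 : ℤ)) (k - 1))
        * (qPoch (q ^ (-(2 * (k : ℤ)))) (q ^ (-2 : ℤ)) (m - k)
            / qPoch (q ^ (-2 : ℤ)) (q ^ (-2 : ℤ)) (m - k))
        * q ^ (-((m : ℤ) - k))
    = 1 / q ^ m * ∑ i ∈ Finset.Icc 1 m,
        (-1 : ℝ) ^ (i - 1)
          / (q ^ (i * (i - 1)) * qPoch (q ^ (-2 : ℤ)) (q ^ (-2 : ℤ)) (m - i)) := by
  obtain ⟨n, rfl⟩ := Nat.exists_eq_add_of_le' hm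
  have hQ : ∀ k : ℕ, (q⁻¹ ^ 2) ^ (k + 1) ≠ 1 := fun k =>
    (pow_lt_one₀ (by positivity) (pow_lt_one₀ (by positivity) (inv_lt_one_of_one_lt₀ hq)
      two_ne_zero) k.succ_ne_zero).ne
  rw [sum_Icc_one_eq_sum_antidiagonal, sum_Icc_one_eq_sum_antidiagonal,
    sum_antidiagonal_d_summand, sum_antidiagonal_alternating_summand,
    qPoch_mul_sum_antidiagonal hQ, one_div, inv_pow]
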